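/- For all natural numbers s, t with 1 ≤ t ≤ s, in ℤ[y,y⁻¹,z,z⁻¹][[q]] one has ∏_{ε₁,ε₂∈{±1}}(1 − q y^{ε₁} z^{ε₂}) · ∑_{ℓ=0}^{t−1} ∑_{n=0}^{t−1−ℓ} ∑_{σ=ℓ}^{∞} q^{σ+2n} χ_{2s−2ℓ+σ}(y) χ_σ(z) = χ_{2s}(y) − q^t χ_{2s−t}(y) χ_t(z) + q^{t+1} χ_{2s−t−1}(y) χ_{t−1}(z). (This is the so(2)⊕so(4) decomposition of the so(2,4) rectangular partially massless module of spin s and depth t: D(s+2−t;(s,s)) ≅ ⊕_{ℓ=0}^{t−1} ⊕_{n=0}^{t−1−ℓ} ⊕_{σ≥ℓ} D(s+2−t+σ+2n;(s+σ−ℓ,s−ℓ)).) -/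

import Mathlib

/-- The two-variable Laurent polynomial ring ℤ[y,y⁻¹,z,z⁻¹], realised as
Laurent polynomials in `z` over Laurent polynomials in `y`. -/
noncomputable abbrev L2 : Type := LaurentPolynomial (LaurentPolynomial ℤ)

/-- The su(2) character `χ_n(y) = ∑_{k=0}^n y^{n-2k}`, in the variable `y`. -/
noncomputable def chiY (n : ℕ) : L2 :=
  LaurentPolynomial.C (∑ k ∈ Finset.range (n + 1), LaurentPolynomial.T ((n : ℤ) - 2 * k))

/-- The su(2) character `χ_n(z) = ∑_{k=0}^n z^{n-2k}`, in the variable `z`. -/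
noncomputable def chiZv (n : ℕ) : L2 :=
  ∑ k ∈ Finset.range (n + 1), LaurentPolynomial.T ((n : ℤ) - 2 * k)

/-- `y^{ε₁} z^{ε₂}` as an element of ℤ[y,y⁻¹,z,z⁻¹]. -/
noncomputable def yz (e₁ e₂ : ℤ) : L2 :=
  LaurentPolynomial.C (LaurentPolynomial.T e₁) * LaurentPolynomial.T e₂

/-- `∏_{ε₁,ε₂∈{±1}} (1 - q y^{ε₁} z^{ε₂})`, the inverse of the universal AdS₅
function `P₄(q,y,z)`, in ℤ[y,y⁻¹,z,z⁻¹][[q]]. -/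
noncomputable def P4inv : PowerSeries L2 :=
  (1 - PowerSeries.C (R := L2) (yz 1 1) * PowerSeries.X) *
  (1 - PowerSeries.C (R := L2) (yz 1 (-1)) * PowerSeries.X) *
  (1 - PowerSeries.C (R := L2) (yz (-1) 1) * PowerSeries.X) *
  (1 - PowerSeries.C (R := L2) (yz (-1) (-1)) * PowerSeries.X)

/-!
Multiply both sides by the Weyl denominator `Δ = (y - y⁻¹)(z - z⁻¹)`. By the Weyl character
formula, `Δ χ_a(y) χ_b(z)` is the alternation of `y^(a+1) z^(b+1)` over the Weyl group `{±1}²`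
acting by `y ↦ y^{±1}`, `z ↦ z^{±1}`, and `P₄⁻¹` is Weyl invariant, so both sides become
alternations. In the alternated term of the left side, the factor `1 - q y z` of `P₄⁻¹` sums the
geometric series in `σ`, and the remaining finite sums over `ℓ` and `n` collapse (one geometric,
one telescoping). What is left differs from the alternated term of the right side by terms
symmetric under `z ↔ z⁻¹`, which the alternation kills.
-/

open Finset PowerSeries

section CommRing

variable {A : Type*} [CommRing A]

theorem sub_mul_sum_pow_mul_pow (x x' : A) (n : ℕ) :
    (x - x') * ∑ i ∈ range (n + 1), x ^ i * x' ^ (n - i) = x ^ (n + 1) - x' ^ (n + 1) := by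
  rw [mul_comm, ← geom_sum₂_mul, Nat.add_sub_cancel]

theorem pow_sub_eq_pow_mul_pow {y y' : A} (hy : y * y' = 1) {k m : ℕ} (h : k ≤ m) :
    y ^ (m - k) = y ^ m * y' ^ k := by
  conv_rhs => rw [← Nat.sub_add_cancel h, pow_add, mul_assoc, ← mul_pow, hy, one_pow, mul_one]

theorem pow_sub_pow_mul_pow_sub_pow_eq {y y' : A} (hy : y * y' = 1) (z z' : A) {s ℓ : ℕ}
    (h : ℓ ≤ s) (σ : ℕ) :
    (y ^ (2 * s - 2 * ℓ + σ + 1) - y' ^ (2 * s - 2 * ℓ + σ + 1)) * (z ^ (σ + 1) - z' ^ (σ + 1)) =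
      (y ^ (2 * s + 1) * z * y' ^ (2 * ℓ) * (y * z) ^ σ -
          y ^ (2 * s + 1) * z' * y' ^ (2 * ℓ) * (y * z') ^ σ) -
        (y' ^ (2 * s + 1) * z * y ^ (2 * ℓ) * (y' * z) ^ σ -
          y' ^ (2 * s + 1) * z' * y ^ (2 * ℓ) * (y' * z') ^ σ) := by
  have hexp : 2 * s - 2 * ℓ + σ + 1 = 2 * s + 1 + σ - 2 * ℓ := by omega
  rw [hexp, pow_sub_eq_pow_mul_pow hy (by omega),
    pow_sub_eq_pow_mul_pow (mul_comm y y' ▸ hy) (by omega)]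
  ring

theorem one_sub_mul_sum_triangle (a b : A) (t : ℕ) :
    (1 - b) * ∑ ℓ ∈ range t, ∑ n ∈ range (t - ℓ), a ^ n * b ^ ℓ =
      ∑ n ∈ range t, a ^ n - ∑ n ∈ range t, a ^ n * b ^ (t - n) := by
  rw [sum_comm' (t' := range t) (s' := fun n => range (t - n)) (fun ℓ n => by
    simp only [mem_range]; omega)]
  rw [mul_sum, ← sum_sub_distrib]
  refine sum_congr rfl fun n _ => ?_
  rw [← mul_sum, mul_left_comm, mul_neg_geom_sum]
  ring

theorem one_sub_mul_sum_telescope {r r' : A} (hr : r' * r = 1) (X : A) (t : ℕ) :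
    (1 - r' * X) * ∑ n ∈ range t, (X ^ 2) ^ n * (r * X) ^ (t - n) = (r * X) ^ t - (X ^ 2) ^ t := by
  have step : ∀ n ∈ range t, (1 - r' * X) * ((X ^ 2) ^ n * (r * X) ^ (t - n)) =
      (X ^ 2) ^ n * (r * X) ^ (t - n) - (X ^ 2) ^ (n + 1) * (r * X) ^ (t - (n + 1)) := by
    intro n hn
    obtain ⟨k, hk⟩ : ∃ k, t - n = k + 1 := ⟨t - n - 1, by have := mem_range.mp hn; omega⟩
    rw [hk, show t - (n + 1) = k by omega]
    linear_combination -(X ^ 2) ^ n * (r * X) ^ k * X ^ 2 * hr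
  rw [mul_sum, sum_congr rfl step, sum_range_sub' (fun n => (X ^ 2) ^ n * (r * X) ^ (t - n))]
  simp

theorem prod_one_sub_mul_triangle_sum {y y' z z' : A} (hy : y * y' = 1) (hz : z * z' = 1)
    (a X : A) (t : ℕ) :
    (1 - y * z' * X) * (1 - y' * z * X) * (1 - y' * z' * X) *
        (a * z * ∑ ℓ ∈ range t, ∑ n ∈ range (t - ℓ), (X ^ 2) ^ n * (y' * z * X) ^ ℓ) =
      a * z - a * y' ^ t * z ^ (t + 1) * X ^ t + a * y' ^ (t + 1) * z ^ t * X ^ (t + 1) +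
        ((X ^ 2 * a * (z + z') - X * a * (y + y')) * ∑ n ∈ range t, (X ^ 2) ^ n
          - X ^ (2 * t + 1) * a * y') := by
  set G := ∑ n ∈ range t, (X ^ 2) ^ n
  have hS := one_sub_mul_sum_triangle (X ^ 2) (y' * z * X) t
  have hH := one_sub_mul_sum_telescope (r := y' * z) (r' := y * z')
    (by linear_combination z * z' * hy + hz) X t
  have hG : (1 - X ^ 2) * G = 1 - (X ^ 2) ^ t := mul_neg_geom_sum _ _
  linear_combination (1 - y * z' * X) * (1 - y' * z' * X) * a * z * hS
    - (1 - y' * z' * X) * a * z * hH + a * z * hG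
    + (-X * a * (y + y') * G + X ^ 2 * a * z' * G + X ^ (t + 1) * a * y' ^ (t + 1) * z ^ t
        - X ^ (2 * t + 1) * a * y') * hz
    + X ^ 2 * a * z * z' ^ 2 * G * hy

end CommRing

section PowerSeries

variable {R : Type*} [CommRing R]

noncomputable def geomTail (u : R) (ℓ : ℕ) : R⟦X⟧ :=
  mk fun σ => if ℓ ≤ σ then u ^ σ else 0

theorem one_sub_C_mul_X_mul_geomTail (u : R) (ℓ : ℕ) :
    (1 - C u * X) * geomTail u ℓ = (C u * X) ^ ℓ := by
  have hgeom : (1 - C u * X) * rescale u (mk 1) = 1 := by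
    rw [← rescale_X, ← map_one (rescale u), ← map_sub, ← map_mul, mul_comm,
      mk_one_mul_one_sub_eq_one, map_one]
  have htail : geomTail u ℓ = (C u * X) ^ ℓ * rescale u (mk 1) := by
    ext σ
    rw [geomTail, coeff_mk, mul_pow, ← map_pow, mul_assoc, coeff_C_mul, coeff_X_pow_mul',
      rescale_mk, coeff_mk]
    split_ifs with h
    · rw [Pi.one_apply, mul_one, ← pow_add, Nat.add_sub_cancel' h]
    · rw [mul_zero]
  rw [htail, mul_left_comm, hgeom, mul_one]

/-- For `a = y ^ (2s+1)` and `y' = y⁻¹`, the coefficient `a z y'^(2ℓ) (y z)^σ` is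
`y^(2s-2ℓ+σ+1) z^(σ+1)`, the leading term of the Weyl numerator of `χ_{2s-2ℓ+σ}(y) χ_σ(z)`. -/
noncomputable def weylTermSeries (a y y' z : R) (t : ℕ) : R⟦X⟧ :=
  mk fun m => ∑ ℓ ∈ range t, ∑ n ∈ range (t - ℓ),
    if 2 * n + ℓ ≤ m then a * z * y' ^ (2 * ℓ) * (y * z) ^ (m - 2 * n) else 0

theorem weylTermSeries_eq_sum (a y y' z : R) (t : ℕ) :
    weylTermSeries a y y' z t = ∑ ℓ ∈ range t, ∑ n ∈ range (t - ℓ),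
      (X ^ 2) ^ n * (C (a * z * y' ^ (2 * ℓ)) * geomTail (y * z) ℓ) := by
  ext m
  simp only [weylTermSeries, geomTail, coeff_mk, map_sum, ← pow_mul, coeff_X_pow_mul',
    coeff_C_mul]
  refine sum_congr rfl fun ℓ _ => sum_congr rfl fun n _ => ?_
  split_ifs <;> first | rfl | omega | simp

theorem one_sub_C_mul_X_mul_weylTermSeries {y y' : R} (hy : y * y' = 1) (a z : R) (t : ℕ) :
    (1 - C (y * z) * X) * weylTermSeries a y y' z t =
      C (a * z) * ∑ ℓ ∈ range t, ∑ n ∈ range (t - ℓ), (X ^ 2) ^ n * (C (y' * z) * X) ^ ℓ := by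
  have shift (ℓ : ℕ) :
      C (a * z * y' ^ (2 * ℓ)) * (C (y * z) * X) ^ ℓ = C (a * z) * (C (y' * z) * X) ^ ℓ := by
    have h : a * z * y' ^ (2 * ℓ) * (y * z) ^ ℓ = a * z * (y' * z) ^ ℓ := by
      calc a * z * y' ^ (2 * ℓ) * (y * z) ^ ℓ = a * z * ((y' * z) ^ ℓ * (y * y') ^ ℓ) := by ring
        _ = a * z * (y' * z) ^ ℓ := by rw [hy, one_pow, mul_one]
    rw [mul_pow, mul_pow, ← map_pow, ← map_pow, ← mul_assoc, ← mul_assoc, ← map_mul, ← map_mul, h]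
  rw [weylTermSeries_eq_sum]
  simp only [mul_sum]
  refine sum_congr rfl fun ℓ _ => sum_congr rfl fun n _ => ?_
  rw [mul_left_comm, mul_left_comm (1 - _), one_sub_C_mul_X_mul_geomTail, shift, mul_left_comm]

noncomputable def p4Inv (y y' z z' : R) : R⟦X⟧ :=
  (1 - C (y * z) * X) * (1 - C (y * z') * X) * (1 - C (y' * z) * X) * (1 - C (y' * z') * X)

theorem p4Inv_swap_left (y y' z z' : R) : p4Inv y' y z z' = p4Inv y y' z z' := by
  unfold p4Inv; ring

theorem p4Inv_swap_right (y y' z z' : R) : p4Inv y y' z' z = p4Inv y y' z z' := by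
  unfold p4Inv; ring

/-- For `a = y ^ (2s+1)` and `y' = y⁻¹`, the leading term of the Weyl numerator of the
rectangular character `χ_{2s}(y) - q^t χ_{2s-t}(y)χ_t(z) + q^{t+1} χ_{2s-t-1}(y)χ_{t-1}(z)`. -/
noncomputable def rectNumerator (a y' z : R) (t : ℕ) : R⟦X⟧ :=
  C (a * z) - C (a * y' ^ t * z ^ (t + 1)) * X ^ t + C (a * y' ^ (t + 1) * z ^ t) * X ^ (t + 1)

/-- The remainder is symmetric under `z ↔ z'`, so it cancels in the Weyl alternation. -/
theorem p4Inv_mul_weylTermSeries {y y' z z' : R} (hy : y * y' = 1) (hz : z * z' = 1)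
    (a : R) (t : ℕ) :
    p4Inv y y' z z' * weylTermSeries a y y' z t = rectNumerator a y' z t +
      ((X ^ 2 * C a * (C z + C z') - X * C a * (C y + C y')) * ∑ n ∈ range t, (X ^ 2) ^ n
        - X ^ (2 * t + 1) * C a * C y') := by
  have h1 := one_sub_C_mul_X_mul_weylTermSeries hy a z t
  have h2 := prod_one_sub_mul_triangle_sum (y := C y) (y' := C y') (z := C z) (z' := C z')
    (by rw [← map_mul, hy, map_one]) (by rw [← map_mul, hz, map_one]) (C a) X t
  simp only [p4Inv, rectNumerator, map_mul, map_pow] at h1 ⊢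
  linear_combination
    (1 - C y * C z' * X) * (1 - C y' * C z * X) * (1 - C y' * C z' * X) * h1 + h2

theorem p4Inv_mul_weylTermSeries_sub_swap {y y' z z' : R} (hy : y * y' = 1) (hz : z * z' = 1)
    (a : R) (t : ℕ) :
    p4Inv y y' z z' * (weylTermSeries a y y' z t - weylTermSeries a y y' z' t) =
      rectNumerator a y' z t - rectNumerator a y' z' t := by
  have h := p4Inv_mul_weylTermSeries hy hz a t
  have h' := p4Inv_mul_weylTermSeries hy (mul_comm z z' ▸ hz) a t
  rw [p4Inv_swap_right] at h'
  rw [mul_sub, h, h']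
  ring

end PowerSeries

section Characters

open LaurentPolynomial

theorem yz_mul (a b c d : ℤ) : yz a b * yz c d = yz (a + c) (b + d) := by
  simp only [yz, T_add, map_mul]; ring

theorem yz_pow (a b : ℤ) (n : ℕ) : yz a b ^ n = yz (n * a) (n * b) := by
  simp only [yz, mul_pow, ← map_pow, T_pow]

theorem yz_one_zero_mul_yz_neg_one_zero : yz 1 0 * yz (-1) 0 = 1 := by
  rw [yz_mul]; norm_num [yz]

theorem yz_zero_one_mul_yz_zero_neg_one : yz 0 1 * yz 0 (-1) = 1 := by
  rw [yz_mul]; norm_num [yz]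

theorem chiZv_eq (n : ℕ) : chiZv n = ∑ i ∈ range (n + 1), yz 0 1 ^ i * yz 0 (-1) ^ (n - i) := by
  rw [chiZv, ← sum_range_reflect]
  refine sum_congr rfl fun i hi => ?_
  have hi : i ≤ n := Nat.lt_succ_iff.mp (mem_range.mp hi)
  rw [yz_pow, yz_pow, yz_mul]
  simp only [yz, mul_zero, add_zero, T_zero, map_one, one_mul, Nat.add_sub_cancel]
  congr 1
  push_cast [Nat.cast_sub hi]
  ring

theorem chiY_eq (n : ℕ) : chiY n = ∑ i ∈ range (n + 1), yz 1 0 ^ i * yz (-1) 0 ^ (n - i) := by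
  rw [chiY, ← sum_range_reflect, map_sum]
  refine sum_congr rfl fun i hi => ?_
  have hi : i ≤ n := Nat.lt_succ_iff.mp (mem_range.mp hi)
  rw [yz_pow, yz_pow, yz_mul]
  simp only [yz, mul_zero, add_zero, T_zero, mul_one, Nat.add_sub_cancel]
  congr 2
  push_cast [Nat.cast_sub hi]
  ring

noncomputable def weylDen : L2 := (yz 1 0 - yz (-1) 0) * (yz 0 1 - yz 0 (-1))

theorem weylDen_mul_chiY_mul_chiZv (a b : ℕ) :
    weylDen * (chiY a * chiZv b) =
      (yz 1 0 ^ (a + 1) - yz (-1) 0 ^ (a + 1)) * (yz 0 1 ^ (b + 1) - yz 0 (-1) ^ (b + 1)) := by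
  rw [weylDen, chiY_eq, chiZv_eq, ← sub_mul_sum_pow_mul_pow, ← sub_mul_sum_pow_mul_pow]
  ring

theorem T_one_sub_T_neg_one_ne_zero {S : Type*} [Ring S] [Nontrivial S] :
    (T 1 - T (-1) : LaurentPolynomial S) ≠ 0 := by
  rw [sub_ne_zero, Ne, T, T, AddMonoidAlgebra.single_left_inj one_ne_zero]
  decide

theorem weylDen_ne_zero : weylDen ≠ 0 := by
  have hy : yz 1 0 - yz (-1) 0 = LaurentPolynomial.C (T 1 - T (-1)) := by simp [yz]
  have hz : yz 0 1 - yz 0 (-1) = T 1 - T (-1) := by simp [yz]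
  rw [weylDen, hy, hz]
  exact mul_ne_zero (AddMonoidAlgebra.single_ne_zero.mpr T_one_sub_T_neg_one_ne_zero)
    T_one_sub_T_neg_one_ne_zero

end Characters

theorem C_weylDen_mul_series (s t : ℕ) (hts : t ≤ s) :
    C weylDen * mk (fun m => ∑ ℓ ∈ range t, ∑ n ∈ range (t - ℓ),
        if 2 * n + ℓ ≤ m then chiY (2 * s - 2 * ℓ + (m - 2 * n)) * chiZv (m - 2 * n) else 0) =
      (weylTermSeries (yz 1 0 ^ (2 * s + 1)) (yz 1 0) (yz (-1) 0) (yz 0 1) t -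
          weylTermSeries (yz 1 0 ^ (2 * s + 1)) (yz 1 0) (yz (-1) 0) (yz 0 (-1)) t) -
        (weylTermSeries (yz (-1) 0 ^ (2 * s + 1)) (yz (-1) 0) (yz 1 0) (yz 0 1) t -
          weylTermSeries (yz (-1) 0 ^ (2 * s + 1)) (yz (-1) 0) (yz 1 0) (yz 0 (-1)) t) := by
  ext m : 1
  simp only [coeff_C_mul, weylTermSeries, map_sub, coeff_mk, Finset.mul_sum, ← sum_sub_distrib]
  refine sum_congr rfl fun ℓ hℓ => sum_congr rfl fun n _ => ?_
  have hℓs : ℓ ≤ s := by simp only [mem_range] at hℓ; omega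
  split_ifs
  · rw [weylDen_mul_chiY_mul_chiZv,
      pow_sub_pow_mul_pow_sub_pow_eq yz_one_zero_mul_yz_neg_one_zero _ _ hℓs]
  · simp

theorem C_weylDen_mul_rectCharacter (s t : ℕ) (ht : 1 ≤ t) (hts : t ≤ s) :
    C weylDen * (C (chiY (2 * s)) - C (chiY (2 * s - t) * chiZv t) * X ^ t +
        C (chiY (2 * s - t - 1) * chiZv (t - 1)) * X ^ (t + 1)) =
      (rectNumerator (yz 1 0 ^ (2 * s + 1)) (yz (-1) 0) (yz 0 1) t -
          rectNumerator (yz 1 0 ^ (2 * s + 1)) (yz (-1) 0) (yz 0 (-1)) t) -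
        (rectNumerator (yz (-1) 0 ^ (2 * s + 1)) (yz 1 0) (yz 0 1) t -
          rectNumerator (yz (-1) 0 ^ (2 * s + 1)) (yz 1 0) (yz 0 (-1)) t) := by
  have hy := yz_one_zero_mul_yz_neg_one_zero
  have hy' : yz (-1) 0 * yz 1 0 = 1 := (mul_comm _ _).trans hy
  rw [← mul_one (chiY (2 * s)), ← show chiZv 0 = 1 by simp [chiZv]]
  simp only [mul_add, mul_sub, ← mul_assoc (C weylDen), ← map_mul, weylDen_mul_chiY_mul_chiZv]
  have hexp₁ : 2 * s - t + 1 = 2 * s + 1 - t := by omega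
  have hexp₂ : 2 * s - t - 1 + 1 = 2 * s + 1 - (t + 1) := by omega
  rw [hexp₁, hexp₂, Nat.sub_add_cancel ht, pow_sub_eq_pow_mul_pow hy (by omega),
    pow_sub_eq_pow_mul_pow hy' (by omega), pow_sub_eq_pow_mul_pow hy (by omega),
    pow_sub_eq_pow_mul_pow hy' (by omega)]
  simp only [rectNumerator, map_mul, map_sub, map_pow]
  ring

theorem P4inv_eq_p4Inv : P4inv = p4Inv (yz 1 0) (yz (-1) 0) (yz 0 1) (yz 0 (-1)) := by
  simp only [P4inv, p4Inv, yz_mul, add_zero, zero_add]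

/-- The triple series is encoded by its coefficients: that of `q^m` collects the terms with
`σ = m - 2n ≥ ℓ`. -/
theorem rectangular_PM_decomposition (s t : ℕ) (ht : 1 ≤ t) (hts : t ≤ s) :
    P4inv * PowerSeries.mk (fun m =>
      ∑ ℓ ∈ Finset.range t, ∑ n ∈ Finset.range (t - ℓ),
        if 2 * n + ℓ ≤ m then chiY (2 * s - 2 * ℓ + (m - 2 * n)) * chiZv (m - 2 * n)
        else 0) =
    PowerSeries.C (R := L2) (chiY (2 * s)) -
      PowerSeries.C (R := L2) (chiY (2 * s - t) * chiZv t) * PowerSeries.X ^ t +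
      PowerSeries.C (R := L2) (chiY (2 * s - t - 1) * chiZv (t - 1)) * PowerSeries.X ^ (t + 1) := by
  have hy := yz_one_zero_mul_yz_neg_one_zero
  have hy' : yz (-1) 0 * yz 1 0 = 1 := (mul_comm _ _).trans hy
  have hz := yz_zero_one_mul_yz_zero_neg_one
  refine mul_left_cancel₀ ((map_ne_zero_iff _ C_injective).mpr weylDen_ne_zero) ?_
  rw [mul_left_comm, C_weylDen_mul_series s t hts, C_weylDen_mul_rectCharacter s t ht hts,
    P4inv_eq_p4Inv, mul_sub, p4Inv_mul_weylTermSeries_sub_swap hy hz, ← p4Inv_swap_left,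
    p4Inv_mul_weylTermSeries_sub_swap hy' hz]
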